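/- If u and v are adjacent vertices of SATP(m,n) (distinct integral points whose segment [u,v] is disjoint from the convex hull of the remaining integral points), then the closed segment [u,v] is a face of SATP_LP(m,n); in particular, every integral point of SATP_LP(m,n) is an extreme point of SATP_LP(m,n). (This is the Trubin quasi-integrality property: the 1-skeleton of SATP(m,n) is a subset of the 1-skeleton of SATP_LP(m,n).) -/

import Mathlib

/-! Every integral point is `intPoint a b`: cell `(i, j)` carries its unit mass at `(b j, a i)`.
If `x ∈ SATP_LP(m,n)` vanishes wherever both `u = intPoint a b` and `v = intPoint a' b'` vanish,
then in each cell `x = (1 - t i j) u + t i j v`, where `t i j` is the mass of `x` on the entry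
of `v`. The row constraints make `t` constant along every row where `a` and `a'` differ, the
column constraints along every column where `b` and `b'` differ. These rows and columns link all
cells where `u ≠ v`, except when `b = b'` and `a, a'` differ in two rows (or the transposed
situation); but then exchanging one of those rows between `u` and `v` gives two other integral
points with the same midpoint, so `u, v` are not adjacent. Hence `t` is constant on the cells
where `u ≠ v` and `x ∈ [u, v]`. Since all coordinates are nonnegative, the points vanishing
where `u` and `v` do form a face, and this face is `[u, v]`. For `u = v` it is `{u}`. -/

open Finset

/-- A point of ℝ^{6mn}: coordinates x^{k,l}_{i,j} with `i : Fin m`, `j : Fin n`,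
`k : Fin 3` (the paper's k-1, since the paper indexes k ∈ {1,2,3}) and
`l : Fin 2` (the paper's l-1). -/
abbrev Pt (m n : ℕ) := Fin m → Fin n → Fin 3 → Fin 2 → ℝ

/-- The relaxation polytope SATP_LP(m,n), given by the constraints (i)-(iv). -/
def SATPLP (m n : ℕ) : Set (Pt m n) :=
  {x | (∀ i j, ∑ k, ∑ l, x i j k l = 1) ∧
       (∀ i j t, ∑ k, x i j k 0 = ∑ k, x i t k 0) ∧
       (∀ k j i s, x i j k 0 + x i j k 1 = x s j k 0 + x s j k 1) ∧
       (∀ i j k l, 0 ≤ x i j k l)}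

/-- The integral points of SATP_LP(m,n): the points all of whose coordinates are 0 or 1. -/
def IntPts (m n : ℕ) : Set (Pt m n) :=
  {x | x ∈ SATPLP m n ∧ ∀ i j k l, x i j k l = 0 ∨ x i j k l = 1}

/-- SATP(m,n): the convex hull of the integral points of SATP_LP(m,n). -/
def SATP (m n : ℕ) : Set (Pt m n) := convexHull ℝ (IntPts m n)

/-- Two distinct integral points u, v of SATP_LP(m,n) are adjacent (as vertices of
SATP(m,n)) iff the segment [u,v] is disjoint from the convex hull of the remaining
integral points. -/
def IsAdjacent {m n : ℕ} (u v : Pt m n) : Prop :=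
  u ∈ IntPts m n ∧ v ∈ IntPts m n ∧ u ≠ v ∧
  segment ℝ u v ∩ convexHull ℝ (IntPts m n \ {u, v}) = ∅

variable {m n : ℕ}

def cellIndicator (k₀ : Fin 3) (l₀ : Fin 2) : Fin 3 → Fin 2 → ℝ :=
  fun k l => if (k, l) = (k₀, l₀) then 1 else 0

lemma sum_cellIndicator_fst (k₀ : Fin 3) (l₀ l : Fin 2) :
    ∑ k, cellIndicator k₀ l₀ k l = if l = l₀ then 1 else 0 := by
  by_cases h : l = l₀ <;> simp [cellIndicator, h]

lemma cellIndicator_add (k₀ k : Fin 3) (l₀ : Fin 2) :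
    cellIndicator k₀ l₀ k 0 + cellIndicator k₀ l₀ k 1 = if k = k₀ then 1 else 0 := by
  rw [← Fin.sum_univ_two (fun l => cellIndicator k₀ l₀ k l)]
  by_cases h : k = k₀ <;> simp [cellIndicator, h]

def intPoint (a : Fin m → Fin 2) (b : Fin n → Fin 3) : Pt m n :=
  fun i j => cellIndicator (b j) (a i)

lemma sum_intPoint_fst (a : Fin m → Fin 2) (b : Fin n → Fin 3) (i j) (l : Fin 2) :
    ∑ k, intPoint a b i j k l = if l = a i then 1 else 0 :=
  sum_cellIndicator_fst _ _ _

lemma intPoint_add (a : Fin m → Fin 2) (b : Fin n → Fin 3) (i j) (k : Fin 3) :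
    intPoint a b i j k 0 + intPoint a b i j k 1 = if k = b j then 1 else 0 :=
  cellIndicator_add _ _ _

lemma intPoint_mem_intPts (a : Fin m → Fin 2) (b : Fin n → Fin 3) :
    intPoint a b ∈ IntPts m n := by
  refine ⟨⟨fun i j => ?_, fun i j j' => ?_, fun k j i i' => ?_, fun i j k l => ?_⟩,
    fun i j k l => ?_⟩
  · rw [sum_comm]
    simp [sum_intPoint_fst]
  · simp only [sum_intPoint_fst]
  · simp only [intPoint_add]
  · unfold intPoint cellIndicator; split_ifs <;> norm_num
  · unfold intPoint cellIndicator; split_ifs <;> simp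

lemma convex_SATPLP (m n : ℕ) : Convex ℝ (SATPLP m n) := by
  intro x hx y hy s t hs ht hst
  refine ⟨fun i j => ?_, fun i j j' => ?_, fun k j i i' => ?_, fun i j k l => ?_⟩ <;>
    simp only [Pi.add_apply, Pi.smul_apply, smul_eq_mul]
  · simp only [sum_add_distrib, ← mul_sum, hx.1 i j, hy.1 i j]
    linarith
  · simp only [sum_add_distrib, ← mul_sum, hx.2.1 i j j', hy.2.1 i j j']
  · linear_combination s * hx.2.2.1 k j i i' + t * hy.2.2.1 k j i i'
  · have := hx.2.2.2 i j k l
    have := hy.2.2.2 i j k l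
    positivity

lemma le_one_of_mem_SATPLP {x : Pt m n} (hx : x ∈ SATPLP m n) (i j k l) : x i j k l ≤ 1 :=
  calc x i j k l ≤ ∑ l', x i j k l' :=
        single_le_sum (fun l' _ => hx.2.2.2 i j k l') (mem_univ l)
    _ ≤ ∑ k', ∑ l', x i j k' l' :=
        single_le_sum (f := fun k' => ∑ l', x i j k' l')
          (fun k' _ => sum_nonneg fun l' _ => hx.2.2.2 i j k' l') (mem_univ k)
    _ = 1 := hx.1 i j

lemma sum_fst_eq_of_mem_SATPLP {x : Pt m n} (hx : x ∈ SATPLP m n) (i j j') (l : Fin 2) :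
    ∑ k, x i j k l = ∑ k, x i j' k l := by
  have hcell : ∀ j, ∑ k, x i j k 0 + ∑ k, x i j k 1 = 1 := fun j => by
    rw [← sum_add_distrib]
    simpa [Fin.sum_univ_two] using hx.1 i j
  match l with
  | 0 => exact hx.2.1 i j j'
  | 1 => linarith [hcell j, hcell j', hx.2.1 i j j']

lemma exists_eq_ite_of_sum_eq_one {α : Type*} [Fintype α] [DecidableEq α] {f : α → ℝ}
    (h01 : ∀ r, f r = 0 ∨ f r = 1) (hsum : ∑ r, f r = 1) :
    ∃ p, ∀ r, f r = if r = p then 1 else 0 := by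
  obtain ⟨p, -, hp⟩ := exists_ne_zero_of_sum_ne_zero (hsum ▸ one_ne_zero : ∑ r, f r ≠ 0)
  have hrest : ∑ r ∈ univ.erase p, f r = 0 := by
    linarith [add_sum_erase univ f (mem_univ p), (h01 p).resolve_left hp]
  rw [sum_eq_zero_iff_of_nonneg fun r _ => by rcases h01 r with h | h <;> simp [h]] at hrest
  refine ⟨p, fun r => ?_⟩
  split_ifs with hr
  · exact hr ▸ (h01 p).resolve_left hp
  · exact hrest r (mem_erase.mpr ⟨hr, mem_univ r⟩)

lemma eq_ite_of_sum_eq_one {α : Type*} [Fintype α] [DecidableEq α] {f : α → ℝ} {p q : α}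
    (hsum : ∑ r, f r = 1) (hf : ∀ r, r ≠ p → r ≠ q → f r = 0) (r : α) :
    f r = (1 - f q) * (if r = p then 1 else 0) + f q * (if r = q then 1 else 0) := by
  rcases eq_or_ne p q with rfl | hpq
  · have hp : f p = 1 := by rw [← hsum, Fintype.sum_eq_single p fun r hr => hf r hr hr]
    by_cases hr : r = p <;> simp [hr, hp, hf]
  · have hpq' : f p + f q = 1 := by
      rw [← hsum, Fintype.sum_eq_add p q hpq fun r ⟨h₁, h₂⟩ => hf r h₁ h₂]
    by_cases hrp : r = p
    · subst hrp; simp [hpq]; linarith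
    by_cases hrq : r = q
    · subst hrq; simp [hrp]
    simp [hrp, hrq, hf r hrp hrq]

lemma exists_eq_cellIndicator {f : Fin 3 → Fin 2 → ℝ} (h01 : ∀ k l, f k l = 0 ∨ f k l = 1)
    (hsum : ∑ k, ∑ l, f k l = 1) : ∃ k₀ l₀, f = cellIndicator k₀ l₀ := by
  obtain ⟨⟨k₀, l₀⟩, h⟩ := exists_eq_ite_of_sum_eq_one (f := fun p : Fin 3 × Fin 2 => f p.1 p.2)
    (fun p => h01 p.1 p.2) (by rw [← hsum, Fintype.sum_prod_type])
  exact ⟨k₀, l₀, funext₂ fun k l => h (k, l)⟩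

lemma exists_eq_intPoint {z : Pt m n} (hz : z ∈ IntPts m n) : ∃ a b, z = intPoint a b := by
  rcases isEmpty_or_nonempty (Fin m) with hm | ⟨⟨i₀⟩⟩
  · exact ⟨isEmptyElim, fun _ => 0, Subsingleton.elim _ _⟩
  rcases isEmpty_or_nonempty (Fin n) with hn | ⟨⟨j₀⟩⟩
  · exact ⟨fun _ => 0, isEmptyElim, Subsingleton.elim _ _⟩
  choose κ ℓ hc using fun i j => exists_eq_cellIndicator (hz.2 i j) (hz.1.1 i j)
  have hℓ : ∀ i j j', ℓ i j = ℓ i j' := by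
    intro i j j'
    have h := sum_fst_eq_of_mem_SATPLP hz.1 i j j' (ℓ i j)
    rw [hc i j, hc i j', sum_cellIndicator_fst, sum_cellIndicator_fst, if_pos rfl] at h
    simpa using h
  have hκ : ∀ i i' j, κ i j = κ i' j := by
    intro i i' j
    have h := hz.1.2.2.1 (κ i j) j i i'
    rw [hc i j, hc i' j, cellIndicator_add, cellIndicator_add, if_pos rfl] at h
    simpa [eq_comm] using h
  refine ⟨fun i => ℓ i j₀, fun j => κ i₀ j, funext₂ fun i j => ?_⟩
  rw [hc i j, hκ i i₀ j, hℓ i j j₀]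
  rfl

lemma isExtreme_setOf_forall_eq_zero {P : Set (Pt m n)}
    (hP : ∀ x ∈ P, ∀ i j k l, 0 ≤ x i j k l) (Z : Fin m → Fin n → Fin 3 → Fin 2 → Prop) :
    IsExtreme ℝ P {x ∈ P | ∀ i j k l, Z i j k l → x i j k l = 0} := by
  refine ⟨fun x hx => hx.1, ?_⟩
  rintro x₁ hx₁ x₂ hx₂ _ ⟨-, hx0⟩ ⟨t₁, t₂, ht₁, ht₂, -, rfl⟩
  refine ⟨hx₁, fun i j k l hZ => ?_⟩
  have h := hx0 i j k l hZ
  simp only [Pi.add_apply, Pi.smul_apply, smul_eq_mul] at h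
  rw [add_eq_zero_iff_of_nonneg (mul_nonneg ht₁.le (hP x₁ hx₁ i j k l))
    (mul_nonneg ht₂.le (hP x₂ hx₂ i j k l))] at h
  exact (mul_eq_zero.mp h.1).resolve_left ht₁.ne'

def supportFace (u v : Pt m n) : Set (Pt m n) :=
  {x ∈ SATPLP m n | ∀ i j k l, u i j k l = 0 ∧ v i j k l = 0 → x i j k l = 0}

lemma isExtreme_supportFace (u v : Pt m n) : IsExtreme ℝ (SATPLP m n) (supportFace u v) :=
  isExtreme_setOf_forall_eq_zero (fun _ hx => hx.2.2.2) _

lemma segment_subset_supportFace {u v : Pt m n} (hu : u ∈ SATPLP m n) (hv : v ∈ SATPLP m n) :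
    segment ℝ u v ⊆ supportFace u v := by
  rintro _ ⟨s, t, hs, ht, hst, rfl⟩
  refine ⟨(convex_SATPLP m n).segment_subset hu hv ⟨s, t, hs, ht, hst, rfl⟩,
    fun i j k l ⟨hu0, hv0⟩ => ?_⟩
  simp [hu0, hv0]

lemma eq_of_mem_cross {ι κ α : Type*} {t : ι → κ → α} {I : Set ι} {J : Set κ}
    (hI : ∀ i ∈ I, ∀ j j', t i j = t i j') (hJ : ∀ j ∈ J, ∀ i i', t i j = t i' j)
    (hIJ : J = ∅ → I.Subsingleton) (hJI : I = ∅ → J.Subsingleton)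
    {i i' : ι} {j j' : κ} (h : i ∈ I ∨ j ∈ J) (h' : i' ∈ I ∨ j' ∈ J) : t i j = t i' j' := by
  rcases h with hi | hj <;> rcases h' with hi' | hj'
  · rcases J.eq_empty_or_nonempty with hJ0 | ⟨j₀, hj₀⟩
    · obtain rfl := hIJ hJ0 hi hi'
      exact hI i hi j j'
    · exact (hI i hi j j₀).trans ((hJ j₀ hj₀ i i').trans (hI i' hi' j₀ j'))
  · exact (hI i hi j j').trans (hJ j' hj' i i')
  · exact (hJ j hj i i').trans (hI i' hi' j j')
  · rcases I.eq_empty_or_nonempty with hI0 | ⟨i₀, hi₀⟩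
    · obtain rfl := hJI hI0 hj hj'
      exact hJ j hj i i'
    · exact (hJ j hj i i₀).trans ((hI i₀ hi₀ j j').trans (hJ j' hj' i₀ i'))

section supportFace

variable {a a' : Fin m → Fin 2} {b b' : Fin n → Fin 3} {x : Pt m n}

lemma eq_combination_of_mem_supportFace (hx : x ∈ supportFace (intPoint a b) (intPoint a' b'))
    (i j k l) : x i j k l = (1 - x i j (b' j) (a' i)) * intPoint a b i j k l
      + x i j (b' j) (a' i) * intPoint a' b' i j k l :=
  eq_ite_of_sum_eq_one (f := fun p : Fin 3 × Fin 2 => x i j p.1 p.2)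
    (by rw [← hx.1.1 i j, Fintype.sum_prod_type])
    (fun r hp hq => hx.2 i j r.1 r.2 ⟨if_neg hp, if_neg hq⟩) (k, l)

lemma coord_eq_of_row_ne (hx : x ∈ supportFace (intPoint a b) (intPoint a' b')) {i : Fin m}
    (hi : a i ≠ a' i) (j j' : Fin n) : x i j (b' j) (a' i) = x i j' (b' j') (a' i) := by
  have hrow : ∀ j, ∑ k, x i j k (a' i) = x i j (b' j) (a' i) := fun j => by
    rw [sum_congr rfl fun k _ => eq_combination_of_mem_supportFace hx i j k (a' i),
      sum_add_distrib, ← mul_sum, ← mul_sum]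
    simp [sum_intPoint_fst, hi.symm]
  rw [← hrow j, ← hrow j', sum_fst_eq_of_mem_SATPLP hx.1]

lemma coord_eq_of_col_ne (hx : x ∈ supportFace (intPoint a b) (intPoint a' b')) {j : Fin n}
    (hj : b j ≠ b' j) (i i' : Fin m) : x i j (b' j) (a' i) = x i' j (b' j) (a' i') := by
  have hcol : ∀ i, x i j (b' j) 0 + x i j (b' j) 1 = x i j (b' j) (a' i) := fun i => by
    have hu := intPoint_add a b i j (b' j)
    have hv := intPoint_add a' b' i j (b' j)
    rw [if_neg hj.symm] at hu
    rw [if_pos rfl] at hv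
    linear_combination eq_combination_of_mem_supportFace hx i j (b' j) 0
      + eq_combination_of_mem_supportFace hx i j (b' j) 1
      + (1 - x i j (b' j) (a' i)) * hu + x i j (b' j) (a' i) * hv
  rw [← hcol i, ← hcol i', hx.1.2.2.1 (b' j) j i i']

lemma supportFace_subset_segment (hIJ : {j | b j ≠ b' j} = ∅ → {i | a i ≠ a' i}.Subsingleton)
    (hJI : {i | a i ≠ a' i} = ∅ → {j | b j ≠ b' j}.Subsingleton) :
    supportFace (intPoint a b) (intPoint a' b') ⊆ segment ℝ (intPoint a b) (intPoint a' b') := by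
  intro x hx
  obtain ⟨c, hc0, hc1, hc⟩ : ∃ c : ℝ, 0 ≤ c ∧ c ≤ 1 ∧
      ∀ i j, a i ≠ a' i ∨ b j ≠ b' j → x i j (b' j) (a' i) = c := by
    by_cases hD : ∃ i j, a i ≠ a' i ∨ b j ≠ b' j
    · obtain ⟨i₀, j₀, h₀⟩ := hD
      exact ⟨_, hx.1.2.2.2 i₀ j₀ _ _, le_one_of_mem_SATPLP hx.1 i₀ j₀ _ _, fun i j h =>
        eq_of_mem_cross (t := fun i j => x i j (b' j) (a' i))
          (fun i hi => coord_eq_of_row_ne hx hi) (fun j hj => coord_eq_of_col_ne hx hj)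
          hIJ hJI h h₀⟩
    · push Not at hD
      exact ⟨0, le_rfl, zero_le_one, fun i j h => (h.elim (· (hD i j).1) (· (hD i j).2)).elim⟩
  refine ⟨1 - c, c, by linarith, hc0, by ring, ?_⟩
  funext i j k l
  simp only [Pi.add_apply, Pi.smul_apply, smul_eq_mul]
  rw [eq_combination_of_mem_supportFace hx i j k l]
  by_cases h : a i ≠ a' i ∨ b j ≠ b' j
  · rw [hc i j h]
  · push Not at h
    simp only [intPoint, h.1, h.2]
    ring

lemma supportFace_eq_segment (hIJ : {j | b j ≠ b' j} = ∅ → {i | a i ≠ a' i}.Subsingleton)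
    (hJI : {i | a i ≠ a' i} = ∅ → {j | b j ≠ b' j}.Subsingleton) :
    supportFace (intPoint a b) (intPoint a' b') = segment ℝ (intPoint a b) (intPoint a' b') :=
  (supportFace_subset_segment hIJ hJI).antisymm
    (segment_subset_supportFace (intPoint_mem_intPts a b).1 (intPoint_mem_intPts a' b').1)

end supportFace

lemma not_isAdjacent_of_add_eq_add {u v w w' : Pt m n} (hw : w ∈ IntPts m n \ {u, v})
    (hw' : w' ∈ IntPts m n \ {u, v}) (h : u + v = w + w') : ¬IsAdjacent u v := by
  rintro ⟨-, -, -, hdisj⟩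
  have hmid : (2⁻¹ : ℝ) • u + (2⁻¹ : ℝ) • v = (2⁻¹ : ℝ) • w + (2⁻¹ : ℝ) • w' := by
    rw [← smul_add, h, smul_add]
  refine Set.eq_empty_iff_forall_notMem.mp hdisj ((2⁻¹ : ℝ) • u + (2⁻¹ : ℝ) • v)
    ⟨⟨2⁻¹, 2⁻¹, by norm_num, by norm_num, by norm_num, rfl⟩, ?_⟩
  rw [hmid]
  exact segment_subset_convexHull hw hw' ⟨2⁻¹, 2⁻¹, by norm_num, by norm_num, by norm_num, rfl⟩

lemma intPoint_ne_of_ne_left [Nonempty (Fin n)] {a a' : Fin m → Fin 2} {i : Fin m}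
    (h : a i ≠ a' i) (b b' : Fin n → Fin 3) : intPoint a b ≠ intPoint a' b' := by
  obtain ⟨j⟩ := ‹Nonempty (Fin n)›
  intro heq
  have := congr_fun (congr_fun (congr_fun (congr_fun heq i) j) (b j)) (a i)
  simp [intPoint, cellIndicator] at this
  exact h this.2

lemma intPoint_ne_of_ne_right [Nonempty (Fin m)] {b b' : Fin n → Fin 3} {j : Fin n}
    (h : b j ≠ b' j) (a a' : Fin m → Fin 2) : intPoint a b ≠ intPoint a' b' := by
  obtain ⟨i⟩ := ‹Nonempty (Fin m)›
  intro heq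
  have := congr_fun (congr_fun (congr_fun (congr_fun heq i) j) (b j)) (a i)
  simp [intPoint, cellIndicator] at this
  exact h this.1

lemma intPoint_add_intPoint_swap_left (a a' : Fin m → Fin 2) (b : Fin n → Fin 3) (i₁ : Fin m) :
    intPoint a b + intPoint a' b
      = intPoint (Function.update a i₁ (a' i₁)) b + intPoint (Function.update a' i₁ (a i₁)) b := by
  funext i j k l
  by_cases hi : i = i₁
  · subst hi
    simp only [Pi.add_apply, intPoint, Function.update_self]
    ring
  · simp only [Pi.add_apply, intPoint, Function.update_of_ne hi]

lemma intPoint_add_intPoint_swap_right (a : Fin m → Fin 2) (b b' : Fin n → Fin 3) (j₁ : Fin n) :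
    intPoint a b + intPoint a b'
      = intPoint a (Function.update b j₁ (b' j₁)) + intPoint a (Function.update b' j₁ (b j₁)) := by
  funext i j k l
  by_cases hj : j = j₁
  · subst hj
    simp only [Pi.add_apply, intPoint, Function.update_self]
    ring
  · simp only [Pi.add_apply, intPoint, Function.update_of_ne hj]

lemma IsAdjacent.subsingleton_ne_left [Nonempty (Fin n)] {a a' : Fin m → Fin 2}
    {b : Fin n → Fin 3} (h : IsAdjacent (intPoint a b) (intPoint a' b)) :
    {i | a i ≠ a' i}.Subsingleton := by
  intro i₁ h₁ i₂ h₂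
  by_contra h₁₂
  have hmem : ∀ c : Fin m → Fin 2, (∃ i, c i ≠ a i) → (∃ i, c i ≠ a' i) →
      intPoint c b ∈ IntPts m n \ {intPoint a b, intPoint a' b} := by
    rintro c ⟨i, hi⟩ ⟨i', hi'⟩
    refine ⟨intPoint_mem_intPts c b, ?_⟩
    rintro (he | he)
    exacts [intPoint_ne_of_ne_left hi b b he, intPoint_ne_of_ne_left hi' b b he]
  refine not_isAdjacent_of_add_eq_add (hmem _ ?_ ?_) (hmem _ ?_ ?_)
    (intPoint_add_intPoint_swap_left a a' b i₁) h
  · exact ⟨i₁, by rw [Function.update_self]; exact Ne.symm h₁⟩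
  · exact ⟨i₂, by rw [Function.update_of_ne (Ne.symm h₁₂)]; exact h₂⟩
  · exact ⟨i₂, by rw [Function.update_of_ne (Ne.symm h₁₂)]; exact Ne.symm h₂⟩
  · exact ⟨i₁, by rw [Function.update_self]; exact h₁⟩

lemma IsAdjacent.subsingleton_ne_right [Nonempty (Fin m)] {a : Fin m → Fin 2}
    {b b' : Fin n → Fin 3} (h : IsAdjacent (intPoint a b) (intPoint a b')) :
    {j | b j ≠ b' j}.Subsingleton := by
  intro j₁ h₁ j₂ h₂
  by_contra h₁₂
  have hmem : ∀ c : Fin n → Fin 3, (∃ j, c j ≠ b j) → (∃ j, c j ≠ b' j) →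
      intPoint a c ∈ IntPts m n \ {intPoint a b, intPoint a b'} := by
    rintro c ⟨j, hj⟩ ⟨j', hj'⟩
    refine ⟨intPoint_mem_intPts a c, ?_⟩
    rintro (he | he)
    exacts [intPoint_ne_of_ne_right hj a a he, intPoint_ne_of_ne_right hj' a a he]
  refine not_isAdjacent_of_add_eq_add (hmem _ ?_ ?_) (hmem _ ?_ ?_)
    (intPoint_add_intPoint_swap_right a b b' j₁) h
  · exact ⟨j₁, by rw [Function.update_self]; exact Ne.symm h₁⟩
  · exact ⟨j₂, by rw [Function.update_of_ne (Ne.symm h₁₂)]; exact h₂⟩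
  · exact ⟨j₂, by rw [Function.update_of_ne (Ne.symm h₁₂)]; exact Ne.symm h₂⟩
  · exact ⟨j₁, by rw [Function.update_self]; exact h₁⟩

lemma IsAdjacent.isExtreme_segment {u v : Pt m n} (h : IsAdjacent u v) :
    IsExtreme ℝ (SATPLP m n) (segment ℝ u v) := by
  obtain ⟨a, b, rfl⟩ := exists_eq_intPoint h.1
  obtain ⟨a', b', rfl⟩ := exists_eq_intPoint h.2.1
  obtain ⟨i₀, hi₀⟩ := Function.ne_iff.mp h.2.2.1
  obtain ⟨j₀, -⟩ := Function.ne_iff.mp hi₀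
  have : Nonempty (Fin m) := ⟨i₀⟩
  have : Nonempty (Fin n) := ⟨j₀⟩
  have hIJ : {j | b j ≠ b' j} = ∅ → {i | a i ≠ a' i}.Subsingleton := fun hJ => by
    obtain rfl : b = b' := funext fun j => by_contra fun hj => hJ.subset hj
    exact h.subsingleton_ne_left
  have hJI : {i | a i ≠ a' i} = ∅ → {j | b j ≠ b' j}.Subsingleton := fun hI => by
    obtain rfl : a = a' := funext fun i => by_contra fun hi => hI.subset hi
    exact h.subsingleton_ne_right
  rw [← supportFace_eq_segment hIJ hJI]
  exact isExtreme_supportFace _ _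

lemma mem_extremePoints_of_mem_intPts {z : Pt m n} (hz : z ∈ IntPts m n) :
    z ∈ Set.extremePoints ℝ (SATPLP m n) := by
  obtain ⟨a, b, rfl⟩ := exists_eq_intPoint hz
  have hI : {i | a i ≠ a i}.Subsingleton := fun _ hi => (hi rfl).elim
  have hJ : {j | b j ≠ b j}.Subsingleton := fun _ hj => (hj rfl).elim
  rw [← isExtreme_singleton, ← segment_same ℝ,
    ← supportFace_eq_segment (fun _ => hI) (fun _ => hJ)]
  exact isExtreme_supportFace _ _

/-- Trubin quasi-integrality: if u and v are adjacent vertices of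
SATP(m,n), then the segment [u,v] is a face of SATP_LP(m,n); in particular every
integral point of SATP_LP(m,n) is an extreme point of SATP_LP(m,n). -/
theorem stmt12 (m n : ℕ) :
    (∀ u v : Pt m n, IsAdjacent u v → IsExtreme ℝ (SATPLP m n) (segment ℝ u v)) ∧
    (∀ z ∈ IntPts m n, z ∈ Set.extremePoints ℝ (SATPLP m n)) :=
  ⟨fun _ _ h => h.isExtreme_segment, fun _ hz => mem_extremePoints_of_mem_intPts hz⟩
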